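/- arXiv:2310.08976 — 3 statements merged into one kernel-verified Lean document; each statement's English description precedes it below -/
import Mathlib

section
/- Let K be a kernel with K^(2) < ∞ and define the 4×4 matrix κ(K) with rows [K^(0), K_+^(0), K^(1), K_+^(1)], [K_+^(0), K_+^(0), K_+^(1), K_+^(1)], [K^(1), K_+^(1), K^(2), K_+^(2)], [K_+^(1), K_+^(1), K_+^(2), K_+^(2)]. Then det κ(K) = ((K_+^(1))² − (1/2)K_+^(2))², and consequently κ(K) is invertible. -/
open MeasureTheory Set

/-- The moment `K^(α) = ∫ K(u) u^α du`. -/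
noncomputable def kmom (K : ℝ → ℝ) (α : ℕ) : ℝ := ∫ u, K u * u ^ α

/-- The right moment `K₊^(α) = ∫_0^∞ K(u) u^α du`. -/
noncomputable def kmomP (K : ℝ → ℝ) (α : ℕ) : ℝ := ∫ u in Ioi (0 : ℝ), K u * u ^ α

/-- The left moment `K₋^(α) = ∫_{-∞}^0 K(u) u^α du`. -/
noncomputable def kmomM (K : ℝ → ℝ) (α : ℕ) : ℝ := ∫ u in Iio (0 : ℝ), K u * u ^ α

/-- The kernel moment matrix `κ(K)`. -/
noncomputable def kappaMat (K : ℝ → ℝ) : Matrix (Fin 4) (Fin 4) ℝ :=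
  !![kmom K 0, kmomP K 0, kmom K 1, kmomP K 1;
     kmomP K 0, kmomP K 0, kmomP K 1, kmomP K 1;
     kmom K 1, kmomP K 1, kmom K 2, kmomP K 2;
     kmomP K 1, kmomP K 1, kmomP K 2, kmomP K 2]

section aux

variable {K : ℝ → ℝ}

lemma int1 (hKint : Integrable K) (hK2 : Integrable (fun u => K u * u ^ 2))
    (hKnn : ∀ x, 0 ≤ K x) : Integrable (fun u => K u * u ^ 1) := by
  refine (hKint.add hK2).mono' ?_ ?_
  · exact hKint.aestronglyMeasurable.mul
      (aestronglyMeasurable_id.pow 1)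
  · filter_upwards with u
    have h1 : |u| ≤ 1 + u ^ 2 := by nlinarith [sq_nonneg (|u| - 1), abs_nonneg u, sq_abs u]
    have := hKnn u
    simp only [Pi.add_apply, Real.norm_eq_abs, abs_mul, abs_of_nonneg this, pow_one]
    calc K u * |u| ≤ K u * (1 + u ^ 2) := by nlinarith
      _ = K u + K u * u ^ 2 := by ring

/-- split: kmom = (-1)^α kmomP + kmomP -/
lemma split (hKsymm : ∀ x, K (-x) = K x) {α : ℕ}
    (hint : Integrable (fun u => K u * u ^ α)) :
    kmom K α = (-1 : ℝ) ^ α * kmomP K α + kmomP K α := by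
  have h1 : kmom K α = (∫ u in Iic (0:ℝ), K u * u ^ α) + ∫ u in Ioi (0:ℝ), K u * u ^ α := by
    rw [kmom, ← intervalIntegral.integral_Iic_add_Ioi hint.integrableOn hint.integrableOn]
  have h2 : (∫ u in Iic (0:ℝ), K u * u ^ α) = (-1 : ℝ) ^ α * ∫ u in Ioi (0:ℝ), K u * u ^ α := by
    rw [show (0:ℝ) = -0 by norm_num, ← integral_comp_neg_Ioi, ← integral_const_mul, neg_zero]
    refine setIntegral_congr_fun measurableSet_Ioi (fun u _ => ?_)
    rw [hKsymm u, neg_pow]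
    ring
  rw [h1, h2, kmomP]

end aux

theorem stmt2 (K : ℝ → ℝ) (hKnn : ∀ x, 0 ≤ K x) (hKint : Integrable K)
    (hKone : (∫ x, K x) = 1) (hKsymm : ∀ x, K (-x) = K x)
    (hK2 : Integrable (fun u => K u * u ^ 2)) :
    (kappaMat K).det = ((kmomP K 1) ^ 2 - (1 / 2) * kmomP K 2) ^ 2 ∧
    IsUnit (kappaMat K).det := by
  have hK0 : Integrable (fun u => K u * u ^ 0) := by simpa using hKint
  have hK1 : Integrable (fun u => K u * u ^ 1) := int1 hKint hK2 hKnn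
  set p := kmomP K 1 with hp
  set q := kmomP K 2 with hq
  -- moment identities
  have e0 : kmom K 0 = 1 := by
    rw [kmom]; simpa using hKone
  have s0 := split hKsymm hK0
  have s1 := split hKsymm hK1
  have s2 := split hKsymm hK2
  simp only [pow_zero, pow_one, pow_two, one_mul, neg_one_mul, neg_mul, neg_neg] at s0 s1 s2
  have e0' : kmomP K 0 = 1 / 2 := by rw [e0] at s0; linarith
  have e1 : kmom K 1 = 0 := by rw [s1]; ring
  have e2 : kmom K 2 = 2 * q := by rw [s2]; ring
  -- determinant formula
  have hdet : (kappaMat K).det = (p ^ 2 - (1 / 2) * q) ^ 2 := by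
    simp only [kappaMat, e0, e0', e1, e2, ← hp, ← hq]
    simp [Matrix.det_succ_row_zero, Fin.sum_univ_succ, Fin.succAbove, Fin.castSucc, Fin.castAdd, Fin.castLE]
    ring
  refine ⟨hdet, ?_⟩
  rw [hdet, isUnit_iff_ne_zero]
  -- strict inequality p^2 < q/2
  have hlt : p ^ 2 < (1 / 2) * q := by
    have hnn : 0 ≤ᵐ[volume.restrict (Ioi (0:ℝ))] fun u => K u * (u - 2 * p) ^ 2 := by
      filter_upwards with u
      exact mul_nonneg (hKnn u) (sq_nonneg _)
    have hintE : IntegrableOn (fun u => K u * (u - 2 * p) ^ 2) (Ioi (0:ℝ)) := by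
      have : (fun u => K u * (u - 2 * p) ^ 2)
          = fun u => K u * u ^ 2 - (4 * p) * (K u * u ^ 1) + (4 * p ^ 2) * (K u * u ^ 0) := by
        funext u; ring
      rw [this]
      exact ((hK2.integrableOn.sub (hK1.integrableOn.const_mul _)).add
        (hK0.integrableOn.const_mul _))
    have hval : (∫ u in Ioi (0:ℝ), K u * (u - 2 * p) ^ 2) = q - 2 * p ^ 2 := by
      have stepA : (∫ u in Ioi (0:ℝ), (K u * u ^ 2 - (4 * p) * (K u * u ^ 1)
            + (4 * p ^ 2) * (K u * u ^ 0)))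
          = (∫ u in Ioi (0:ℝ), (K u * u ^ 2 - (4 * p) * (K u * u ^ 1)))
            + ∫ u in Ioi (0:ℝ), (4 * p ^ 2) * (K u * u ^ 0) :=
        integral_add ((hK2.integrableOn).sub ((hK1.integrableOn).const_mul _))
          ((hK0.integrableOn).const_mul _)
      have stepB : (∫ u in Ioi (0:ℝ), (K u * u ^ 2 - (4 * p) * (K u * u ^ 1)))
          = (∫ u in Ioi (0:ℝ), K u * u ^ 2) - ∫ u in Ioi (0:ℝ), (4 * p) * (K u * u ^ 1) :=
        integral_sub hK2.integrableOn ((hK1.integrableOn).const_mul _)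
      have step : (∫ u in Ioi (0:ℝ), (K u * u ^ 2 - (4 * p) * (K u * u ^ 1)
            + (4 * p ^ 2) * (K u * u ^ 0)))
          = (∫ u in Ioi (0:ℝ), K u * u ^ 2) - (4 * p) * (∫ u in Ioi (0:ℝ), K u * u ^ 1)
            + (4 * p ^ 2) * (∫ u in Ioi (0:ℝ), K u * u ^ 0) := by
        rw [stepA, stepB, integral_const_mul, integral_const_mul]
      have eqf : (∫ u in Ioi (0:ℝ), K u * (u - 2 * p) ^ 2)
          = ∫ u in Ioi (0:ℝ), (K u * u ^ 2 - (4 * p) * (K u * u ^ 1)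
            + (4 * p ^ 2) * (K u * u ^ 0)) := by
        refine setIntegral_congr_fun measurableSet_Ioi (fun u _ => ?_)
        ring
      rw [eqf, step, ← kmomP, ← kmomP, ← kmomP, ← hq, e0']
      ring
    have hge : 0 ≤ q - 2 * p ^ 2 := hval ▸ integral_nonneg_of_ae hnn
    rcases lt_or_eq_of_le hge with h | h
    · linarith
    · exfalso
      have hz : (∫ u in Ioi (0:ℝ), K u * (u - 2 * p) ^ 2) = 0 := by rw [hval, ← h]
      have hae := (setIntegral_eq_zero_iff_of_nonneg_ae hnn hintE).mp hz
      have hKz : K =ᵐ[volume.restrict (Ioi (0:ℝ))] 0 := by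
        have hne : ∀ᵐ u ∂(volume.restrict (Ioi (0:ℝ))), u ≠ 2 * p := by
          refine ae_restrict_of_ae ?_
          have : volume ({2 * p} : Set ℝ) = 0 := measure_singleton _
          rw [ae_iff]
          simpa [Classical.not_not] using this
        filter_upwards [hae, hne] with u h1 h2
        have : (u - 2 * p) ^ 2 ≠ 0 := pow_ne_zero _ (sub_ne_zero.mpr h2)
        have h1' : K u * (u - 2 * p) ^ 2 = 0 := h1
        simpa [this] using mul_eq_zero.mp h1'
      have : kmomP K 0 = 0 := by
        rw [kmomP]
        refine integral_eq_zero_of_ae ?_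
        filter_upwards [hKz] with u h
        simp only [Pi.zero_apply] at h
        simp [h]
      rw [e0'] at this; norm_num at this
  have : p ^ 2 - (1 / 2) * q ≠ 0 := by intro h; nlinarith
  exact pow_ne_zero _ this
end

section
/- Second-order Taylor/kernel expansion of local means: let L: ℝ → ℝ be integrable with compact support in [−1,1] and L^(2) < ∞, let f: ℝ → ℝ be twice one-sided differentiable at 0 (with continuous one-sided extensions of f, f', f'') and f_X twice continuously differentiable near 0. Then, as h → 0, E[(1/h)L(X/h) f(X)] = L_-^(0) f_- f_X(0) + L_+^(0) f_+ f_X(0) + h[L_-^(1)(f·f_X)'_- + L_+^(1)(f·f_X)'_+] + (h²/2)[L_-^(2)(f·f_X)''_- + L_+^(2)(f·f_X)''_+] + o(h²), where X has density f_X. -/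
open MeasureTheory Set Filter Topology Asymptotics


lemma taylor2_bound {F : ℝ → ℝ} {ε : ℝ} (hε : 0 < ε)
    (hF : ContDiffOn ℝ 2 F (Ioo (-ε) ε)) {c : ℝ} (hc : 0 < c) :
    ∃ δ > 0, δ < ε ∧ ∀ x : ℝ, |x| ≤ δ →
      |F x - F 0 - deriv F 0 * x - iteratedDeriv 2 F 0 / 2 * x ^ 2| ≤ c * x ^ 2 := by
  have hs : IsOpen (Ioo (-ε) ε) := isOpen_Ioo
  have h0 : (0 : ℝ) ∈ Ioo (-ε) ε := ⟨by linarith, hε⟩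
  have hF1 : ContDiffOn ℝ 1 (deriv F) (Ioo (-ε) ε) := by
    have := hF.deriv_of_isOpen hs (m := 1) (by norm_num)
    exact this
  have hFd : DifferentiableOn ℝ F (Ioo (-ε) ε) := hF.differentiableOn (by norm_num)
  have hF1d : DifferentiableOn ℝ (deriv F) (Ioo (-ε) ε) := hF1.differentiableOn one_ne_zero
  have hF2c : ContinuousOn (deriv (deriv F)) (Ioo (-ε) ε) := by
    have := hF1.deriv_of_isOpen hs (m := 0) (by norm_num)
    exact this.continuousOn
  set A := deriv (deriv F) 0 with hA
  set B := deriv F 0 with hB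
  have hiter : iteratedDeriv 2 F 0 = A := by
    simp [iteratedDeriv_succ, iteratedDeriv_one, hA]
  have hcont : ContinuousAt (deriv (deriv F)) 0 :=
    (hF2c 0 h0).continuousAt (hs.mem_nhds h0)
  obtain ⟨δ₁, hδ₁, hd1⟩ := Metric.continuousAt_iff.1 hcont c hc
  set δ := min (δ₁ / 2) (ε / 2) with hδdef
  have hδpos : 0 < δ := by positivity
  have hδε : δ < ε := lt_of_le_of_lt (min_le_right _ _) (by linarith)
  refine ⟨δ, hδpos, hδε, ?_⟩
  have hsub : Icc (-δ) δ ⊆ Ioo (-ε) ε := fun y hy =>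
    ⟨by have := hy.1; have : -(ε/2) ≤ y := by have := min_le_right (δ₁/2) (ε/2); linarith
        linarith,
     by have := hy.2; have : y ≤ ε/2 := le_trans this (min_le_right _ _); linarith⟩
  -- bound on second derivative on Icc (-δ) δ
  have hD2 : ∀ y ∈ Icc (-δ) δ, |deriv (deriv F) y - A| ≤ c := by
    intro y hy
    have hyd : dist y 0 < δ₁ := by
      rw [Real.dist_eq, sub_zero]
      have h1 : |y| ≤ δ := abs_le.2 hy
      have h2 : δ ≤ δ₁ / 2 := min_le_left _ _
      linarith
    have := hd1 hyd
    rw [Real.dist_eq] at this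
    exact le_of_lt this
  -- step 1 : |deriv F y - B - A * y| ≤ c * |y| on Icc (-δ) δ
  have step1 : ∀ y ∈ Icc (-δ) δ, |deriv F y - B - A * y| ≤ c * |y| := by
    intro y hy
    have hmv := Convex.norm_image_sub_le_of_norm_hasDerivWithin_le
      (f := fun z => deriv F z - B - A * z) (f' := fun z => deriv (deriv F) z - A)
      (s := Icc (-δ) δ) (C := c) (x := 0) (y := y) ?_ ?_ (convex_Icc _ _)
      ⟨by linarith, by linarith⟩ hy
    · simpa [hB] using hmv.trans_eq (by rw [Real.norm_eq_abs, sub_zero])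
    · intro z hz
      have hdz : DifferentiableAt ℝ (deriv F) z :=
        (hF1d z (hsub hz)).differentiableAt (hs.mem_nhds (hsub hz))
      have : HasDerivAt (fun z => deriv F z - B - A * z) (deriv (deriv F) z - A) z := by
        have h1 : HasDerivAt (deriv F) (deriv (deriv F) z) z := hdz.hasDerivAt
        have h2 : HasDerivAt (fun z : ℝ => A * z) A z := by
          simpa using (hasDerivAt_id z).const_mul A
        exact (h1.sub_const B).sub h2
      exact this.hasDerivWithinAt
    · intro z hz
      rw [Real.norm_eq_abs]
      exact hD2 z hz
  -- step 2
  intro x hx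
  have hxI : x ∈ Icc (-δ) δ := abs_le.1 hx
  rw [hiter]
  set φ := fun y : ℝ => F y - F 0 - B * y - A / 2 * y ^ 2 with hφ
  have hT : uIcc 0 x ⊆ Icc (-δ) δ := by
    rw [uIcc]
    exact Icc_subset_Icc (le_min (by linarith) hxI.1) (max_le hδpos.le hxI.2)
  have hmv := Convex.norm_image_sub_le_of_norm_hasDerivWithin_le
    (f := φ) (f' := fun z => deriv F z - B - A * z)
    (s := uIcc 0 x) (C := c * |x|) ?_ ?_ (convex_uIcc _ _) left_mem_uIcc right_mem_uIcc
  · have hφ0 : φ 0 = 0 := by simp [hφ]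
    have : ‖φ x‖ ≤ c * |x| * ‖x‖ := by simpa [hφ0] using hmv
    rw [Real.norm_eq_abs] at this
    calc |F x - F 0 - B * x - A / 2 * x ^ 2| = |φ x| := rfl
      _ ≤ c * |x| * |x| := this
      _ = c * x ^ 2 := by rw [mul_assoc, abs_mul_abs_self]; ring
  · intro z hz
    have hzI : z ∈ Ioo (-ε) ε := hsub (hT hz)
    have h1 : HasDerivAt F (deriv F z) z :=
      ((hFd z hzI).differentiableAt (hs.mem_nhds hzI)).hasDerivAt
    have h2 : HasDerivAt (fun y : ℝ => B * y) B z := by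
      simpa using (hasDerivAt_id z).const_mul B
    have h3 : HasDerivAt (fun y : ℝ => A / 2 * y ^ 2) (A * z) z := by
      have := (hasDerivAt_pow 2 z).const_mul (A / 2)
      simpa using this.congr_deriv (by ring)
    have : HasDerivAt φ (deriv F z - B - A * z) z := by
      exact ((h1.sub_const (F 0)).sub h2).sub h3
    exact this.hasDerivWithinAt
  · intro z hz
    have hzd : z ∈ Icc (-δ) δ := hT hz
    have h1 : |z| ≤ |x| := by
      rw [uIcc, mem_Icc] at hz
      rcases le_or_gt 0 x with hx0 | hx0
      · rw [abs_of_nonneg hx0]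
        have : min 0 x = 0 := min_eq_left hx0
        rw [this] at hz
        have : max 0 x = x := max_eq_right hx0
        rw [this] at hz
        rw [abs_le]; exact ⟨by linarith [hz.1], hz.2⟩
      · rw [abs_of_neg hx0]
        have h2 : min 0 x = x := min_eq_right hx0.le
        have h3 : max 0 x = 0 := max_eq_left hx0.le
        rw [h2, h3] at hz
        rw [abs_le]; constructor <;> linarith [hz.1, hz.2]
    calc ‖deriv F z - B - A * z‖ = |deriv F z - B - A * z| := rfl
      _ ≤ c * |z| := step1 z hzd
      _ ≤ c * |x| := by nlinarith [abs_nonneg z]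


lemma integrable_mul_comp {L : ℝ → ℝ} (hL : Integrable L)
    (hLsupp : ∀ u, u ∉ Icc (-1 : ℝ) 1 → L u = 0)
    {G : ℝ → ℝ} {ε h : ℝ} (hG : ContinuousOn G (Ioo (-ε) ε)) (hh : 0 < h) (hhε : h < ε) :
    Integrable (fun u => L u * G (u * h)) := by
  have hmap : MapsTo (fun u : ℝ => u * h) (Icc (-1) 1) (Ioo (-ε) ε) := by
    intro u hu
    have h1 : |u| ≤ 1 := abs_le.2 hu
    have h2 : |u * h| ≤ h := by
      rw [abs_mul, abs_of_pos hh]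
      nlinarith
    obtain ⟨ha, hb⟩ := abs_le.1 h2
    exact ⟨by simp only; linarith, by simp only; linarith⟩
  have hcont : ContinuousOn (fun u => G (u * h)) (Icc (-1) 1) :=
    hG.comp ((continuous_id.mul continuous_const).continuousOn) hmap
  obtain ⟨C, hC⟩ := isCompact_Icc.exists_bound_of_continuousOn hcont
  have hind : (fun u => L u * G (u * h)) =
      (Icc (-1 : ℝ) 1).indicator (fun u => L u * G (u * h)) := by
    funext u
    by_cases hu : u ∈ Icc (-1 : ℝ) 1
    · simp [hu]
    · simp [hu, hLsupp u hu]
  rw [hind, integrable_indicator_iff measurableSet_Icc]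
  have : (fun u => L u * G (u * h)) = fun u => G (u * h) * L u := by funext u; ring
  rw [IntegrableOn, this]
  exact Integrable.bdd_mul (hL.integrableOn)
    (hcont.aestronglyMeasurable measurableSet_Icc)
    ((ae_restrict_iff' measurableSet_Icc).2 (ae_of_all _ hC))

lemma side_est {L : ℝ → ℝ} (hL : Integrable L)
    (hLsupp : ∀ u, u ∉ Icc (-1 : ℝ) 1 → L u = 0)
    (hL1 : Integrable fun u => L u * u) (hL2 : Integrable fun u => L u * u ^ 2)
    {F : ℝ → ℝ} {ε : ℝ} (hε : 0 < ε) (hF : ContDiffOn ℝ 2 F (Ioo (-ε) ε))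
    {c' : ℝ} (hc' : 0 < c') :
    ∃ δ > 0, δ < ε ∧ ∀ h : ℝ, 0 < h → h ≤ δ → ∀ s : Set ℝ, MeasurableSet s →
      |(∫ u in s, L u * F (u * h)) -
        ((∫ u in s, L u) * F 0 + h * ((∫ u in s, L u * u) * deriv F 0) +
          h ^ 2 / 2 * ((∫ u in s, L u * u ^ 2) * iteratedDeriv 2 F 0))| ≤
        c' * h ^ 2 * ∫ u, ‖L u * u ^ 2‖ := by
  obtain ⟨δ, hδ0, hδε, htay⟩ := taylor2_bound hε hF hc'
  refine ⟨δ, hδ0, hδε, ?_⟩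
  intro h hh0 hhδ s hs
  set B := deriv F 0 with hB
  set A := iteratedDeriv 2 F 0 with hA
  have hIntF : Integrable (fun u => L u * F (u * h)) :=
    integrable_mul_comp hL hLsupp hF.continuousOn hh0 (lt_of_le_of_lt hhδ hδε)
  have e1 : (fun u => L u * (F (u * h) - F 0 - B * (u * h) - A / 2 * (u * h) ^ 2)) =
      fun u => L u * F (u * h) - F 0 * L u - h * B * (L u * u) -
        A * h ^ 2 / 2 * (L u * u ^ 2) := by
    funext u; ring
  have hIntc : Integrable
      (fun u => L u * (F (u * h) - F 0 - B * (u * h) - A / 2 * (u * h) ^ 2)) := by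
    rw [e1]
    exact ((hIntF.sub (hL.const_mul _)).sub (hL1.const_mul _)).sub (hL2.const_mul _)
  have i1 : Integrable (fun u => F 0 * L u) := hL.const_mul _
  have i2 : Integrable (fun u => h * B * (L u * u)) := hL1.const_mul _
  have i3 : Integrable (fun u => A * h ^ 2 / 2 * (L u * u ^ 2)) := hL2.const_mul _
  have j1 : Integrable (fun u => L u * F (u * h) - F 0 * L u) := hIntF.sub i1
  have j2 : Integrable (fun u => (L u * F (u * h) - F 0 * L u) - h * B * (L u * u)) := j1.sub i2
  have hkey : (∫ u in s, L u * (F (u * h) - F 0 - B * (u * h) - A / 2 * (u * h) ^ 2)) =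
      (∫ u in s, L u * F (u * h)) -
        ((∫ u in s, L u) * F 0 + h * ((∫ u in s, L u * u) * B) +
          h ^ 2 / 2 * ((∫ u in s, L u * u ^ 2) * A)) := by
    rw [e1,
      integral_sub (j2.integrableOn) (i3.integrableOn),
      integral_sub (j1.integrableOn) (i2.integrableOn),
      integral_sub (hIntF.integrableOn) (i1.integrableOn),
      integral_const_mul, integral_const_mul, integral_const_mul]
    ring
  rw [← hkey]
  have hptw : ∀ u : ℝ, ‖L u * (F (u * h) - F 0 - B * (u * h) - A / 2 * (u * h) ^ 2)‖ ≤
      c' * h ^ 2 * ‖L u * u ^ 2‖ := by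
    intro u
    by_cases hu : u ∈ Icc (-1 : ℝ) 1
    · have h1 : |u| ≤ 1 := abs_le.2 hu
      have habs : |u * h| ≤ δ := by
        rw [abs_mul, abs_of_pos hh0]
        nlinarith
      have ht := htay (u * h) habs
      rw [hB, hA] at *
      calc ‖L u * (F (u * h) - F 0 - deriv F 0 * (u * h) -
              iteratedDeriv 2 F 0 / 2 * (u * h) ^ 2)‖
          = |L u| * |F (u * h) - F 0 - deriv F 0 * (u * h) -
              iteratedDeriv 2 F 0 / 2 * (u * h) ^ 2| := by
            rw [Real.norm_eq_abs, abs_mul]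
        _ ≤ |L u| * (c' * (u * h) ^ 2) :=
            mul_le_mul_of_nonneg_left ht (abs_nonneg _)
        _ = c' * h ^ 2 * ‖L u * u ^ 2‖ := by
            rw [Real.norm_eq_abs, abs_mul, abs_of_nonneg (sq_nonneg u)]
            ring
    · rw [hLsupp u hu]
      simp only [zero_mul, norm_zero]
      positivity
  calc |∫ u in s, L u * (F (u * h) - F 0 - B * (u * h) - A / 2 * (u * h) ^ 2)|
      = ‖∫ u in s, L u * (F (u * h) - F 0 - B * (u * h) - A / 2 * (u * h) ^ 2)‖ :=
      (Real.norm_eq_abs _).symm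
    _ ≤ ∫ u in s, ‖L u * (F (u * h) - F 0 - B * (u * h) - A / 2 * (u * h) ^ 2)‖ :=
      norm_integral_le_integral_norm _
    _ ≤ ∫ u in s, c' * h ^ 2 * ‖L u * u ^ 2‖ :=
      integral_mono (hIntc.norm.integrableOn) (((hL2.norm).const_mul _).integrableOn) hptw
    _ = c' * h ^ 2 * ∫ u in s, ‖L u * u ^ 2‖ := integral_const_mul _ _
    _ ≤ c' * h ^ 2 * ∫ u, ‖L u * u ^ 2‖ := by
      have hle : (∫ u in s, ‖L u * u ^ 2‖) ≤ ∫ u, ‖L u * u ^ 2‖ :=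
        setIntegral_le_integral hL2.norm (ae_of_all _ fun u => norm_nonneg _)
      exact mul_le_mul_of_nonneg_left hle (by positivity)

/-- Second-order Taylor/kernel expansion of local means:
`∫ L(u) f(uh) f_X(uh) du` (the substituted form of `E[(1/h)L(X/h)f(X)]`) equals
the two-sided Taylor expansion up to order `h²`, with remainder `o(h²)` as `h ↘ 0`. -/
theorem stmt14 (L : ℝ → ℝ) (hL : Integrable L)
    (hLsupp : ∀ u, u ∉ Icc (-1 : ℝ) 1 → L u = 0)
    (hL2 : Integrable fun u => L u * u ^ 2)
    (f gm gp fX : ℝ → ℝ)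
    (hgm : ContDiff ℝ 2 gm) (hgp : ContDiff ℝ 2 gp)
    (hfm : ∀ x < (0 : ℝ), f x = gm x) (hfp : ∀ x > (0 : ℝ), f x = gp x)
    (ε : ℝ) (hε : 0 < ε) (hfX : ContDiffOn ℝ 2 fX (Ioo (-ε) ε)) :
    (fun h : ℝ => (∫ u, L u * f (u * h) * fX (u * h)) -
        ((∫ u in Iio (0 : ℝ), L u) * gm 0 * fX 0 +
          (∫ u in Ioi (0 : ℝ), L u) * gp 0 * fX 0 +
          h * ((∫ u in Iio (0 : ℝ), L u * u) * deriv (fun x => gm x * fX x) 0 +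
            (∫ u in Ioi (0 : ℝ), L u * u) * deriv (fun x => gp x * fX x) 0) +
          h ^ 2 / 2 *
            ((∫ u in Iio (0 : ℝ), L u * u ^ 2) *
                iteratedDeriv 2 (fun x => gm x * fX x) 0 +
              (∫ u in Ioi (0 : ℝ), L u * u ^ 2) *
                iteratedDeriv 2 (fun x => gp x * fX x) 0)))
      =o[nhdsWithin 0 (Ioi 0)] (fun h : ℝ => h ^ 2) := by
  -- integrability of L u * u
  have hL1 : Integrable (fun u => L u * u) := by
    refine hL.mono (hL.1.mul aestronglyMeasurable_id) (ae_of_all _ fun u => ?_)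
    by_cases hu : u ∈ Icc (-1 : ℝ) 1
    · have h1 : |u| ≤ 1 := abs_le.2 hu
      rw [Real.norm_eq_abs, Real.norm_eq_abs, abs_mul]
      nlinarith [abs_nonneg (L u)]
    · rw [hLsupp u hu]
      simp
  -- the two C² products
  have hFm : ContDiffOn ℝ 2 (fun x => gm x * fX x) (Ioo (-ε) ε) :=
    (hgm.contDiffOn).mul hfX
  have hFp : ContDiffOn ℝ 2 (fun x => gp x * fX x) (Ioo (-ε) ε) :=
    (hgp.contDiffOn).mul hfX
  set I2 : ℝ := ∫ u, ‖L u * u ^ 2‖ with hI2def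
  have hI2nn : 0 ≤ I2 := integral_nonneg fun u => norm_nonneg _
  rw [Asymptotics.isLittleO_iff]
  intro c hc
  set c' : ℝ := c / (4 * (I2 + 1)) with hc'def
  have hc'pos : 0 < c' := by positivity
  obtain ⟨δm, hδm0, hδmε, hestm⟩ := side_est hL hLsupp hL1 hL2 hε hFm hc'pos
  obtain ⟨δp, hδp0, hδpε, hestp⟩ := side_est hL hLsupp hL1 hL2 hε hFp hc'pos
  set η : ℝ := min δm δp with hηdef
  have hη0 : 0 < η := lt_min hδm0 hδp0
  filter_upwards [Ioo_mem_nhdsGT_of_mem (⟨le_refl (0:ℝ), hη0⟩ : (0:ℝ) ∈ Ico 0 η)]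
    with h hh
  obtain ⟨hh0, hhη⟩ := hh
  have hhδm : h ≤ δm := le_of_lt (lt_of_lt_of_le hhη (min_le_left _ _))
  have hhδp : h ≤ δp := le_of_lt (lt_of_lt_of_le hhη (min_le_right _ _))
  have hhε : h < ε := lt_of_le_of_lt hhδm hδmε
  -- splitting the integral
  have hIntm : Integrable (fun u => L u * (gm (u * h) * fX (u * h))) :=
    integrable_mul_comp hL hLsupp hFm.continuousOn hh0 hhε
  have hIntp : Integrable (fun u => L u * (gp (u * h) * fX (u * h))) :=
    integrable_mul_comp hL hLsupp hFp.continuousOn hh0 hhε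
  have h0ae : ∀ᵐ u : ℝ, u ≠ (0 : ℝ) := by
    rw [ae_iff]
    simp only [ne_eq, not_not, setOf_eq_eq_singleton]
    exact measure_singleton 0
  have hsplit : (∫ u, L u * f (u * h) * fX (u * h)) =
      (∫ u in Iio (0:ℝ), L u * (gm (u * h) * fX (u * h))) +
        (∫ u in Ioi (0:ℝ), L u * (gp (u * h) * fX (u * h))) := by
    have heq : (fun u => L u * f (u * h) * fX (u * h)) =ᵐ[volume]
        fun u => (Iio (0:ℝ)).indicator (fun u => L u * (gm (u * h) * fX (u * h))) u +
          (Ioi (0:ℝ)).indicator (fun u => L u * (gp (u * h) * fX (u * h))) u := by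
      filter_upwards [h0ae] with u hu
      rcases lt_or_gt_of_ne hu with h1 | h1
      · rw [indicator_of_mem (mem_Iio.2 h1),
          indicator_of_notMem (by simp only [mem_Ioi, not_lt]; exact h1.le),
          hfm (u * h) (mul_neg_of_neg_of_pos h1 hh0)]
        ring
      · rw [indicator_of_notMem (by simp only [mem_Iio, not_lt]; exact h1.le),
          indicator_of_mem (mem_Ioi.2 h1),
          hfp (u * h) (mul_pos h1 hh0)]
        ring
    rw [integral_congr_ae heq,
      integral_add (hIntm.indicator measurableSet_Iio) (hIntp.indicator measurableSet_Ioi),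
      integral_indicator measurableSet_Iio, integral_indicator measurableSet_Ioi]
  have hEm := hestm h hh0 hhδm (Iio 0) measurableSet_Iio
  have hEp := hestp h hh0 hhδp (Ioi 0) measurableSet_Ioi
  rw [hsplit]
  have hrw : ((∫ u in Iio (0:ℝ), L u * (gm (u * h) * fX (u * h))) +
        (∫ u in Ioi (0:ℝ), L u * (gp (u * h) * fX (u * h))) -
        ((∫ u in Iio (0 : ℝ), L u) * gm 0 * fX 0 +
          (∫ u in Ioi (0 : ℝ), L u) * gp 0 * fX 0 +
          h * ((∫ u in Iio (0 : ℝ), L u * u) * deriv (fun x => gm x * fX x) 0 +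
            (∫ u in Ioi (0 : ℝ), L u * u) * deriv (fun x => gp x * fX x) 0) +
          h ^ 2 / 2 *
            ((∫ u in Iio (0 : ℝ), L u * u ^ 2) *
                iteratedDeriv 2 (fun x => gm x * fX x) 0 +
              (∫ u in Ioi (0 : ℝ), L u * u ^ 2) *
                iteratedDeriv 2 (fun x => gp x * fX x) 0))) =
      ((∫ u in Iio (0:ℝ), L u * (gm (u * h) * fX (u * h))) -
        ((∫ u in Iio (0:ℝ), L u) * (gm 0 * fX 0) +
          h * ((∫ u in Iio (0:ℝ), L u * u) * deriv (fun x => gm x * fX x) 0) +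
          h ^ 2 / 2 * ((∫ u in Iio (0:ℝ), L u * u ^ 2) *
            iteratedDeriv 2 (fun x => gm x * fX x) 0))) +
      ((∫ u in Ioi (0:ℝ), L u * (gp (u * h) * fX (u * h))) -
        ((∫ u in Ioi (0:ℝ), L u) * (gp 0 * fX 0) +
          h * ((∫ u in Ioi (0:ℝ), L u * u) * deriv (fun x => gp x * fX x) 0) +
          h ^ 2 / 2 * ((∫ u in Ioi (0:ℝ), L u * u ^ 2) *
            iteratedDeriv 2 (fun x => gp x * fX x) 0))) := by
    ring
  rw [hrw, Real.norm_eq_abs, Real.norm_eq_abs]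
  have habs : |h ^ 2| = h ^ 2 := abs_of_nonneg (sq_nonneg h)
  rw [habs]
  have hfact : c' * (I2 + 1) = c / 4 := by
    rw [hc'def]; field_simp
  calc |_ + _| ≤ c' * h ^ 2 * I2 + c' * h ^ 2 * I2 :=
      le_trans (abs_add_le _ _) (add_le_add hEm hEp)
    _ ≤ c * h ^ 2 := by
      have h1 : c' * I2 ≤ c / 4 := by nlinarith [hc'pos]
      nlinarith [sq_nonneg h, h1, hc'pos]
end

section
/- Bounded false rejection in the sensitivity analysis: with R = (0, τ̂ − τ̄ − q_{1−α}Ŝ_n/√(nh)] and H₀ = [|Δ|, ∞) when τ₀ ≤ τ̄ (and H₀ = ∅ otherwise), if τ₀ ≤ τ̄ and √(nh)(τ̂ − τ₀ − Δ)/Ŝ_n →d N(0,1), then P(R ∩ H₀ ≠ ∅) = P(τ̂ − τ̄ − q_{1−α}Ŝ_n/√(nh) ≥ |Δ|) ≤ P(√(nh)(τ̂ − τ₀ − Δ)/Ŝ_n ≥ q_{1−α}) → α as n → ∞. -/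
open MeasureTheory Filter Topology ProbabilityTheory

/-- Bounded false rejection in the sensitivity analysis: if `τ₀ ≤ τ̄` and
`√(nh)(τ̂ − τ₀ − Δ)/Ŝₙ →d N(0,1)`, then
`P(τ̂ − τ̄ − q Ŝₙ/√(nh) ≥ |Δ|) ≤ P(√(nh)(τ̂ − τ₀ − Δ)/Ŝₙ ≥ q) → α`. -/
theorem stmt19 (Ω : ℕ → Type) [∀ n, MeasurableSpace (Ω n)]
    (μ : ∀ n, Measure (Ω n)) [∀ n, IsProbabilityMeasure (μ n)]
    (τhat Shat : ∀ n : ℕ, Ω n → ℝ)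
    (hτmeas : ∀ n, Measurable (τhat n)) (hSmeas : ∀ n, Measurable (Shat n))
    (hSpos : ∀ n ω, 0 < Shat n ω)
    (h : ℕ → ℝ) (hpos : ∀ n, 0 < h n)
    (hnh : Tendsto (fun n : ℕ => (n : ℝ) * h n) atTop atTop)
    (τ₀ Δ τbar α q : ℝ) (hτbar : 0 < τbar) (hττ : τ₀ ≤ τbar)
    (hα : α ∈ Set.Ioo (0 : ℝ) 1)
    (hq : (gaussianReal 0 1) (Set.Iic q) = ENNReal.ofReal (1 - α))
    (Z : ∀ n : ℕ, Ω n → ℝ)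
    (hZ : ∀ n ω, Z n ω =
      Real.sqrt ((n : ℝ) * h n) * (τhat n ω - τ₀ - Δ) / Shat n ω)
    (hweak : ∀ g : BoundedContinuousFunction ℝ ℝ,
      Tendsto (fun n : ℕ => ∫ ω, g (Z n ω) ∂μ n) atTop
        (nhds (∫ x, g x ∂(gaussianReal 0 1)))) :
    (∀ n : ℕ, 1 ≤ n →
      (μ n) {ω | |Δ| ≤ τhat n ω - τbar - q * Shat n ω / Real.sqrt ((n : ℝ) * h n)} ≤
        (μ n) {ω | q ≤ Z n ω}) ∧
    Tendsto (fun n : ℕ => ((μ n) {ω | q ≤ Z n ω}).toReal) atTop (nhds α) := by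
  have hZmeas : ∀ n, Measurable (Z n) := by
    intro n
    have : Z n = fun ω => Real.sqrt ((n : ℝ) * h n) * (τhat n ω - τ₀ - Δ) / Shat n ω := by
      funext ω; exact hZ n ω
    rw [this]
    exact (((hτmeas n).sub_const τ₀).sub_const Δ |>.const_mul _).div (hSmeas n)
  constructor
  · intro n hn
    apply measure_mono
    intro ω hω
    simp only [Set.mem_setOf_eq] at hω ⊢
    have hnh0 : (0:ℝ) < (n : ℝ) * h n :=
      mul_pos (by exact_mod_cast hn) (hpos n)
    have hs : (0:ℝ) < Real.sqrt ((n : ℝ) * h n) := Real.sqrt_pos.2 hnh0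
    have hS := hSpos n ω
    rw [hZ n ω, le_div_iff₀ hS]
    have h1 : q * Shat n ω / Real.sqrt ((n : ℝ) * h n) ≤ τhat n ω - τ₀ - Δ := by
      have h2 : Δ ≤ |Δ| := le_abs_self Δ
      linarith
    have h3 := (div_le_iff₀ hs).mp h1
    linarith [h3, mul_comm (τhat n ω - τ₀ - Δ) (Real.sqrt ((n : ℝ) * h n))]
  · set ν : ℕ → ProbabilityMeasure ℝ := fun n =>
      ⟨(μ n).map (Z n), Measure.isProbabilityMeasure_map (hZmeas n).aemeasurable⟩ with hν
    set G : ProbabilityMeasure ℝ := ⟨gaussianReal 0 1, inferInstance⟩ with hG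
    have hνlim : Tendsto ν atTop (𝓝 G) := by
      rw [ProbabilityMeasure.tendsto_iff_forall_integral_tendsto]
      intro f
      have heq : ∀ n, ∫ x, f x ∂((ν n : Measure ℝ)) = ∫ ω, f (Z n ω) ∂μ n := fun n =>
        integral_map (hZmeas n).aemeasurable f.continuous.aestronglyMeasurable
      simp only [heq]
      exact hweak f
    have hsing : (gaussianReal 0 1) {q} = 0 :=
      (gaussianReal_absolutelyContinuous 0 one_ne_zero) (measure_singleton q)
    have hfront : (G : Measure ℝ) (frontier (Set.Ici q)) = 0 := by
      rw [frontier_Ici]; exact hsing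
    have key := MeasureTheory.ProbabilityMeasure.tendsto_measure_of_null_frontier_of_tendsto'
      hνlim hfront
    have hmap : ∀ n, ((ν n : Measure ℝ)) (Set.Ici q) = (μ n) {ω | q ≤ Z n ω} := by
      intro n
      show ((μ n).map (Z n)) (Set.Ici q) = _
      rw [Measure.map_apply (hZmeas n) measurableSet_Ici]
      rfl
    have hGq : (G : Measure ℝ) (Set.Ici q) = ENNReal.ofReal α := by
      show (gaussianReal 0 1) (Set.Ici q) = _
      have hIio : (gaussianReal 0 1) (Set.Iio q) = ENNReal.ofReal (1 - α) := by
        refine le_antisymm ?_ ?_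
        · rw [← hq]; exact measure_mono Set.Iio_subset_Iic_self
        · calc ENNReal.ofReal (1 - α) = (gaussianReal 0 1) (Set.Iic q) := hq.symm
            _ ≤ (gaussianReal 0 1) (Set.Iio q ∪ {q}) := by
                apply measure_mono; intro x hx
                simp only [Set.mem_Iic] at hx
                simp only [Set.mem_union, Set.mem_Iio, Set.mem_singleton_iff]
                exact hx.lt_or_eq
            _ ≤ (gaussianReal 0 1) (Set.Iio q) + (gaussianReal 0 1) {q} := measure_union_le _ _
            _ = (gaussianReal 0 1) (Set.Iio q) := by rw [hsing, add_zero]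
      have hcompl : Set.Ici q = (Set.Iio q)ᶜ := by simp
      rw [hcompl, measure_compl measurableSet_Iio (measure_ne_top _ _), measure_univ, hIio]
      have : ENNReal.ofReal α = 1 - ENNReal.ofReal (1 - α) := by
        rw [← ENNReal.ofReal_one,
          ← ENNReal.ofReal_sub _ (by linarith [hα.2] : (0:ℝ) ≤ 1 - α)]
        norm_num
      exact this.symm
    have key2 : Tendsto (fun n => (μ n) {ω | q ≤ Z n ω}) atTop (𝓝 (ENNReal.ofReal α)) := by
      rw [← hGq]
      simpa only [hmap] using key
    have := (ENNReal.tendsto_toReal (by simp : ENNReal.ofReal α ≠ ⊤)).comp key2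
    simpa [ENNReal.toReal_ofReal (le_of_lt hα.1), Function.comp_def] using this
end
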